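/- Let π ∈ S_r with permutation matrix w, let 2 ≤ j ≤ r−2 with (π(r), j) ∈ Inv(π⁻¹) (so n_{π(r),j} is a free variable), and let 1 ≤ d ≤ r with (π(d), j) ∈ Inv(π⁻¹). Then D_{↑,d}(n_{π(r),j}) = D(n_{π(d),j}) and D₁(n_{π(d),j}) = D₁(n_{π(r),j}) ∩ D_{↗,π(d)}(n_{π(r),j}). -/

import Mathlib

/-!
Moving the bottom row of the submatrix up from `d'` to `d` only discards the destination
rows below `d` and the origins in rows `≥ d`; since `O₁` consists of origins strictly above the
bottom row, it is unchanged in rows above `d`. Intersecting with `D_{↗,π(d)}` cuts out exactly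
the rows above `d`, because every destination of a free variable in column `j` lies in a column
`≥ j > π(d)`.
-/

open Finset

/-- positions (row, column) in the matrix `wn`, 0-indexed -/
abbrev Pos (r : ℕ) := Fin r × Fin r

/-- the entry of `wn` at position `p` is nonzero: it is the `1` of its
column (`p.2 = π p.1`) or a free variable. -/
abbrev IsNonzero {r : ℕ} (π : Equiv.Perm (Fin r)) (p : Pos r) : Prop :=
  p.2 = π p.1 ∨ (π p.1 < p.2 ∧ π.symm p.2 < p.1)

/-- the entry of `wn` at position `p` is a free variable, i.e.
`(π p.1, p.2) ∈ Inv (π⁻¹)` -/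
abbrev IsFree {r : ℕ} (π : Equiv.Perm (Fin r)) (p : Pos r) : Prop :=
  π p.1 < p.2 ∧ π.symm p.2 < p.1

/-- a step of a path: move left or up to the neighboring nonzero entry -/
def Step {r : ℕ} (π : Equiv.Perm (Fin r)) (x y : Pos r) : Prop :=
  (x.1 = y.1 ∧ y.2 < x.2 ∧ IsNonzero π y ∧
      ∀ c : Fin r, y.2 < c → c < x.2 → ¬ IsNonzero π (x.1, c)) ∨
  (x.2 = y.2 ∧ y.1 < x.1 ∧ IsNonzero π y ∧
      ∀ a : Fin r, y.1 < a → a < x.1 → ¬ IsNonzero π (a, x.2))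

/-- a path: a nonempty list of nonzero entries, each step going up or left to
a neighboring nonzero entry.  The head is the origin, the last entry the
destination. -/
def IsPath {r : ℕ} (π : Equiv.Perm (Fin r)) (l : List (Pos r)) : Prop :=
  l ≠ [] ∧ (∀ x ∈ l, IsNonzero π x) ∧ l.Chain' (Step π)

/-- `S` is a set of pairwise disjoint paths connecting `A` bijectively to `B`,
i.e. `S ∈ 𝒫(A → B)` -/
def Conn {r : ℕ} (π : Equiv.Perm (Fin r)) (A B : Finset (Pos r))
    (S : Finset (List (Pos r))) : Prop :=
  (∀ l ∈ S, IsPath π l) ∧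
  (∀ l ∈ S, ∀ l' ∈ S, l ≠ l' → ∀ x ∈ l, x ∉ l') ∧
  (∀ a, a ∈ A ↔ ∃ l ∈ S, l.head? = some a) ∧
  (∀ b, b ∈ B ↔ ∃ l ∈ S, l.getLast? = some b)

/-- the monomial given by the product of the free variables traversed by a
path, in `ℤ[{n_α}]` -/
noncomputable def uPath {r : ℕ} (π : Equiv.Perm (Fin r)) (l : List (Pos r)) :
    MvPolynomial (Pos r) ℤ :=
  ∏ x ∈ l.toFinset.filter (fun x => IsFree π x), MvPolynomial.X x

/-- `u(S)` for a set of disjoint paths `S` -/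
noncomputable def uSet {r : ℕ} (π : Equiv.Perm (Fin r))
    (S : Finset (List (Pos r))) : MvPolynomial (Pos r) ℤ :=
  ∏ l ∈ S, uPath π l

/-- `P(A → B)`: sum of `u(S)` over all sets of disjoint paths connecting
`A` to `B` -/
noncomputable def Psum {r : ℕ} (π : Equiv.Perm (Fin r)) (A B : Finset (Pos r)) :
    MvPolynomial (Pos r) ℤ :=
  ∑ᶠ S ∈ {S : Finset (List (Pos r)) | Conn π A B S}, uSet π S

/-- every positive-length path whose origin lies in the rightmost column
starts by going left -/
def StartsLeft (r : ℕ) (l : List (Pos r)) : Prop :=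
  ∀ x ∈ l.head?, (x.2 : ℕ) = r - 1 → ∀ y ∈ l.tail.head?, y.1 = x.1

/-- `P_L(A → B)` -/
noncomputable def PLsum {r : ℕ} (π : Equiv.Perm (Fin r))
    (A B : Finset (Pos r)) : MvPolynomial (Pos r) ℤ :=
  ∑ᶠ S ∈ {S : Finset (List (Pos r)) | Conn π A B S ∧ ∀ l ∈ S, StartsLeft r l},
    uSet π S

/-- the column of the rightmost nonzero entry of row `a` -/
def gammaCol {r : ℕ} (π : Equiv.Perm (Fin r)) (a : Fin r) : Fin r :=
  (Finset.univ.filter fun c => IsNonzero π (a, c)).max'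
    ⟨π a, Finset.mem_filter.2 ⟨Finset.mem_univ _, Or.inl rfl⟩⟩

/-- `γ(row a)`: the rightmost nonzero entry of row `a`, as a position -/
def gammaPos {r : ℕ} (π : Equiv.Perm (Fin r)) (a : Fin r) : Pos r :=
  (a, gammaCol π a)

/-- `ρ(row a)`: the product of the nonzero entries (equivalently, of the free
variables) of row `a` -/
noncomputable def rho {r : ℕ} (π : Equiv.Perm (Fin r)) (a : Fin r) :
    MvPolynomial (Pos r) ℤ :=
  ∏ c ∈ Finset.univ.filter (fun c => IsFree π (a, c)),
    MvPolynomial.X ((a, c) : Pos r)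
/-- the last (rightmost column / bottom row) index -/
def lastIdx (r : ℕ) [NeZero r] : Fin r :=
  ⟨r - 1, by have := Nat.pos_of_ne_zero (NeZero.ne r); omega⟩

/-- rows of the submatrix `M_w(n_{π(d),j})` containing a `1`:
rows `a` with `π⁻¹(j) ≤ a ≤ d` whose `1` lies in column `≥ j` -/
def destRows {r : ℕ} (π : Equiv.Perm (Fin r)) (d j : Fin r) : Finset (Fin r) :=
  Finset.univ.filter fun a => π.symm j ≤ a ∧ a ≤ d ∧ j ≤ π a

/-- `D(n_{π(d),j})`: the destinations of the free variable at position `(d,j)` -/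
def Dest {r : ℕ} (π : Equiv.Perm (Fin r)) (d j : Fin r) : Finset (Pos r) :=
  (destRows π d j).image fun a => (a, π a)

/-- `O(n_{π(d),j})`: the origins — the rightmost nonzero entry of the bottom
row `d`, and the rightmost nonzero entries of the rows containing a
destination other than the top destination `1_j` -/
def Orig {r : ℕ} (π : Equiv.Perm (Fin r)) (d j : Fin r) : Finset (Pos r) :=
  insert (gammaPos π d) (((destRows π d j).erase (π.symm j)).image (gammaPos π))

/-- `O₁(n_{π(d),j})`: origins in the rightmost column, above the bottom
origin, lying directly below a free variable which is not an origin -/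
def O1 {r : ℕ} (π : Equiv.Perm (Fin r)) (d j : Fin r) : Finset (Pos r) :=
  (Orig π d j).filter fun x =>
    (x.2 : ℕ) = r - 1 ∧ x.1 < d ∧
      ∃ t : Fin r, (t : ℕ) + 1 = (x.1 : ℕ) ∧ IsFree π (t, x.2) ∧
        (t, x.2) ∉ Orig π d j

/-- `D₁(n_{π(d),j})`: destinations in the rows containing an element of `O₁` -/
def D1 {r : ℕ} (π : Equiv.Perm (Fin r)) (d j : Fin r) : Finset (Pos r) :=
  (Dest π d j).filter fun y => ∃ x ∈ O1 π d j, x.1 = y.1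

/-- `D_{↗,l}(n_{π(d),j})`: destinations equal to `1_l` or above and to the
right of `1_l` -/
def Dne {r : ℕ} (π : Equiv.Perm (Fin r)) (d j l : Fin r) : Finset (Pos r) :=
  (Dest π d j).filter fun y =>
    y = ((π.symm l, l) : Pos r) ∨ (y.1 < π.symm l ∧ l < y.2)

lemma le_lastIdx {r : ℕ} [NeZero r] (a : Fin r) : a ≤ lastIdx r := by
  simp only [Fin.le_def, lastIdx]
  omega

section BottomRow

variable {r : ℕ} (π : Equiv.Perm (Fin r)) {d d' j : Fin r}

lemma mem_Dest_iff {y : Pos r} : y ∈ Dest π d j ↔ y.1 ∈ destRows π d j ∧ y.2 = π y.1 := by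
  constructor
  · intro h
    obtain ⟨a, ha, rfl⟩ := mem_image.1 h
    exact ⟨ha, rfl⟩
  · rintro ⟨ha, hy⟩
    exact mem_image.2 ⟨y.1, ha, Prod.ext rfl hy.symm⟩

lemma mem_destRows_iff_of_le (hdd' : d ≤ d') {a : Fin r} :
    a ∈ destRows π d j ↔ a ∈ destRows π d' j ∧ a ≤ d := by
  simp only [destRows, mem_filter, mem_univ, true_and]
  exact ⟨fun ⟨h1, h2, h3⟩ => ⟨⟨h1, h2.trans hdd', h3⟩, h2⟩,
    fun ⟨⟨h1, _, h3⟩, h2⟩ => ⟨h1, h2, h3⟩⟩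

lemma filter_Dest_of_le (hdd' : d ≤ d') :
    (Dest π d' j).filter (fun y => (y.1 : ℕ) ≤ (d : ℕ)) = Dest π d j := by
  ext y
  simp only [mem_filter, mem_Dest_iff, mem_destRows_iff_of_le π hdd', Fin.le_def]
  tauto

lemma mem_Orig_iff_of_lt (hdd' : d ≤ d') {x : Pos r} (hx : x.1 < d) :
    x ∈ Orig π d j ↔ x ∈ Orig π d' j := by
  have hx' : x ≠ gammaPos π d := fun h => hx.ne (congrArg Prod.fst h)
  have hx'' : x ≠ gammaPos π d' := fun h => (hx.trans_le hdd').ne (congrArg Prod.fst h)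
  simp only [Orig, mem_insert, hx', hx'', false_or, mem_image, mem_erase,
    mem_destRows_iff_of_le π hdd']
  constructor
  · rintro ⟨b, ⟨hb, hbd, -⟩, rfl⟩
    exact ⟨b, ⟨hb, hbd⟩, rfl⟩
  · rintro ⟨b, ⟨hb, hbd⟩, rfl⟩
    exact ⟨b, ⟨hb, hbd, hx.le⟩, rfl⟩

lemma mem_O1_iff_of_lt (hdd' : d ≤ d') {x : Pos r} (hx : x.1 < d) :
    x ∈ O1 π d j ↔ x ∈ O1 π d' j := by
  have above : ∀ t : Fin r, (t : ℕ) + 1 = x.1 → ((t, x.2) : Pos r).1 < d := fun t ht =>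
    lt_trans (show t < x.1 from Fin.lt_def.2 (by omega)) hx
  simp only [O1, mem_filter, mem_Orig_iff_of_lt π hdd' hx, hx, hx.trans_le hdd', true_and]
  constructor
  · rintro ⟨ho, hc, t, ht, hf, hno⟩
    exact ⟨ho, hc, t, ht, hf, (mem_Orig_iff_of_lt π hdd' (above t ht)).not.1 hno⟩
  · rintro ⟨ho, hc, t, ht, hf, hno⟩
    exact ⟨ho, hc, t, ht, hf, (mem_Orig_iff_of_lt π hdd' (above t ht)).not.2 hno⟩

lemma D1_eq_filter_of_le (hdd' : d ≤ d') :
    D1 π d j = (D1 π d' j).filter (fun y => y.1 < d) := by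
  ext y
  simp only [D1, mem_filter, ← filter_Dest_of_le π hdd']
  constructor
  · rintro ⟨⟨hy, -⟩, x, hx, hxy⟩
    have hxd : x.1 < d := (mem_filter.1 hx).2.2.1
    exact ⟨⟨hy, x, (mem_O1_iff_of_lt π hdd' hxd).1 hx, hxy⟩, hxy ▸ hxd⟩
  · rintro ⟨⟨hy, x, hx, hxy⟩, hyd⟩
    have hxd : x.1 < d := hxy ▸ hyd
    exact ⟨⟨hy, Fin.le_def.1 hyd.le⟩, x, (mem_O1_iff_of_lt π hdd' hxd).2 hx, hxy⟩

lemma mem_Dne_iff_of_lt (hd : π d < j) {y : Pos r} (hy : y ∈ Dest π d' j) :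
    y ∈ Dne π d' j (π d) ↔ y.1 < d := by
  obtain ⟨hrow, hcol⟩ := (mem_Dest_iff π).1 hy
  have hjy : j ≤ y.2 := hcol ▸ (mem_filter.1 hrow).2.2.2
  have hright : π d < y.2 := hd.trans_le hjy
  simp only [Dne, mem_filter, hy, true_and, Equiv.symm_apply_apply, hright, and_true]
  exact or_iff_right fun h => hright.ne' (congrArg Prod.snd h)

end BottomRow

theorem Dest_up_and_D1_inter_general {r : ℕ} [NeZero r] (π : Equiv.Perm (Fin r))
    (j d : Fin r) (hfd : IsFree π (d, j)) :
    (Dest π (lastIdx r) j).filter (fun y => (y.1 : ℕ) ≤ (d : ℕ)) = Dest π d j ∧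
    D1 π d j = D1 π (lastIdx r) j ∩ Dne π (lastIdx r) j (π d) := by
  refine ⟨filter_Dest_of_le π (le_lastIdx d), ?_⟩
  rw [D1_eq_filter_of_le π (le_lastIdx d)]
  ext y
  simp only [mem_filter, mem_inter]
  refine and_congr_right fun hy => ?_
  exact (mem_Dne_iff_of_lt π hfd.1 (mem_filter.1 hy).1).symm

/-- For `2 ≤ j ≤ r−2` (1-indexed) with `n_{π(r),j}` free and any `d` with
`n_{π(d),j}` free, the destinations of `n_{π(r),j}` in or above row `d` are
exactly the destinations of `n_{π(d),j}`, and
`D₁(n_{π(d),j}) = D₁(n_{π(r),j}) ∩ D_{↗,π(d)}(n_{π(r),j})`. -/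
theorem Dest_up_and_D1_inter {r : ℕ} [NeZero r] (π : Equiv.Perm (Fin r))
    (j d : Fin r) (hj1 : 1 ≤ (j : ℕ)) (hj2 : (j : ℕ) ≤ r - 3)
    (hfr : IsFree π (lastIdx r, j)) (hfd : IsFree π (d, j)) :
    (Dest π (lastIdx r) j).filter (fun y => (y.1 : ℕ) ≤ (d : ℕ)) = Dest π d j ∧
    D1 π d j = D1 π (lastIdx r) j ∩ Dne π (lastIdx r) j (π d) :=
  Dest_up_and_D1_inter_general π j d hfd
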